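/- Let n ≥ 2, R > 1 and Ω = B_R \ closure(B_1) ⊂ ℝⁿ. Let f : ℝ → ℝ be a C¹ function with f(s) ≤ 0 for all s, and let u ∈ C²(closure(Ω)) satisfy Δu = f(u) in Ω, u = 1 on |x| = 1, and u = 0 on |x| = R. If x₀ ∈ ∂B_R has first coordinate (x₀)₁ > 0, then there exists δ > 0 such that ∂u/∂x₁(x) < 0 for all x ∈ Ω with |x − x₀| < δ. -/

import Mathlib

open Metric Set

/-- The Laplacian `Δu(x) = ∑ ∂²u/∂xᵢ²` of a function on Euclidean space. -/
noncomputable def lapl {n : ℕ} (u : EuclideanSpace ℝ (Fin n) → ℝ)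
    (x : EuclideanSpace ℝ (Fin n)) : ℝ :=
  ∑ i : Fin n,
    iteratedFDeriv ℝ 2 u x ![EuclideanSpace.single i 1, EuclideanSpace.single i 1]

/-!
The barrier `w x = exp (-n‖x‖²) - exp (-nR²)` has `Δw > 0` wherever `‖x‖ ≥ 1`, while
`Δu = f u ≤ 0`. Hence `u - w` has no interior minimum on the annulus, and as `u - w ≥ 0` on both
boundary spheres, `w ≤ u` on the closed annulus. Both vanish at `x₀`, so the derivative of `u` at
`x₀` in the inward direction `-x₀` dominates that of `w`, which is positive (Hopf's lemma).
Since `u` vanishes on the outer sphere, `Du(x₀)` kills `x₀ᗮ`, so `Du(x₀) = λ ⟪x₀, ·⟫` with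
`λ < 0`, and `∂₁u(x₀) = λ (x₀)₁ < 0`. Continuity of `Du` up to the boundary finishes the proof.
-/

open Filter Topology
open scoped RealInnerProductSpace

theorem IsLocalMin.deriv_deriv_nonneg {f : ℝ → ℝ} {a : ℝ} (h : IsLocalMin f a)
    (hc : ContinuousAt f a) : 0 ≤ deriv (deriv f) a := by
  by_contra! hneg
  have hmax : IsLocalMax f a := isLocalMax_of_deriv_deriv_neg hneg h.deriv_eq_zero hc
  have hconst : f =ᶠ[𝓝 a] fun _ => f a := (h.and hmax).mono fun x hx => le_antisymm hx.2 hx.1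
  have : deriv (deriv f) a = 0 := by simp [hconst.deriv.deriv_eq]
  exact hneg.ne this

section Line

variable {E : Type*} [NormedAddCommGroup E] [NormedSpace ℝ E]

theorem ContDiffAt.iteratedFDeriv_two_apply_self_eq_deriv_deriv {F : E → ℝ} {z : E}
    (hF : ContDiffAt ℝ 2 F z) (e : E) :
    iteratedFDeriv ℝ 2 F z ![e, e] = deriv (deriv fun t : ℝ => F (z + t • e)) 0 := by
  have hline (t : ℝ) : HasDerivAt (fun s : ℝ => z + s • e) e t := by
    simpa using ((hasDerivAt_id t).smul_const e).const_add z
  have hdiff : ∀ᶠ t in 𝓝 (0 : ℝ), DifferentiableAt ℝ F (z + t • e) := by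
    have hz : Tendsto (fun t : ℝ => z + t • e) (𝓝 0) (𝓝 z) := by
      simpa using (hline 0).continuousAt.tendsto
    exact hz.eventually <| (hF.eventually (by simp)).mono fun y hy =>
      hy.differentiableAt (by norm_num)
  have hderiv : deriv (fun t : ℝ => F (z + t • e)) =ᶠ[𝓝 (0 : ℝ)]
      fun t : ℝ => fderiv ℝ F (z + t • e) e :=
    hdiff.mono fun t ht => (ht.hasFDerivAt.comp_hasDerivAt t (hline t)).deriv
  have hF' : HasFDerivAt (fderiv ℝ F) (fderiv ℝ (fderiv ℝ F) z) (z + (0 : ℝ) • e) := by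
    simpa using ((hF.fderiv_right (m := 1) (by norm_num)).differentiableAt
      (by norm_num)).hasFDerivAt
  have hcomp : HasDerivAt (fun t : ℝ => fderiv ℝ F (z + t • e)) (fderiv ℝ (fderiv ℝ F) z e) 0 :=
    hF'.comp_hasDerivAt (0 : ℝ) (hline 0)
  have happly := hcomp.clm_apply (hasDerivAt_const (0 : ℝ) e)
  simp only [map_zero, add_zero] at happly
  rw [iteratedFDeriv_two_apply, hderiv.deriv_eq, happly.deriv]
  rfl

theorem IsLocalMin.iteratedFDeriv_two_apply_self_nonneg {F : E → ℝ} {z : E} (h : IsLocalMin F z)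
    (hF : ContDiffAt ℝ 2 F z) (e : E) : 0 ≤ iteratedFDeriv ℝ 2 F z ![e, e] := by
  have hline : ContinuousAt (fun t : ℝ => z + t • e) 0 := by fun_prop
  rw [hF.iteratedFDeriv_two_apply_self_eq_deriv_deriv]
  refine IsLocalMin.deriv_deriv_nonneg ?_ ?_
  · exact IsLocalMin.comp_continuous (by simpa using h) hline
  · exact hF.continuousAt.comp_of_eq hline (by simp)

end Line

section Laplacian

variable {n : ℕ}

theorem IsLocalMin.lapl_nonneg {F : EuclideanSpace ℝ (Fin n) → ℝ} {z : EuclideanSpace ℝ (Fin n)}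
    (h : IsLocalMin F z) (hF : ContDiffAt ℝ 2 F z) : 0 ≤ lapl F z :=
  Finset.sum_nonneg fun _ _ => h.iteratedFDeriv_two_apply_self_nonneg hF _

theorem lapl_sub {F G : EuclideanSpace ℝ (Fin n) → ℝ} {z : EuclideanSpace ℝ (Fin n)}
    (hF : ContDiffAt ℝ 2 F z) (hG : ContDiffAt ℝ 2 G z) :
    lapl (F - G) z = lapl F z - lapl G z := by
  simp [lapl, iteratedFDeriv_sub_apply hF hG, Finset.sum_sub_distrib]

theorem le_of_forall_mem_frontier_le_of_lapl_neg {Ω : Set (EuclideanSpace ℝ (Fin n))}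
    (hΩ : IsOpen Ω) (hΩc : IsCompact (closure Ω)) {F : EuclideanSpace ℝ (Fin n) → ℝ}
    (hFc : ContinuousOn F (closure Ω)) (hF : ∀ z ∈ Ω, ContDiffAt ℝ 2 F z)
    (hlapl : ∀ z ∈ Ω, lapl F z < 0) {m : ℝ} (hfr : ∀ z ∈ frontier Ω, m ≤ F z) :
    ∀ x ∈ closure Ω, m ≤ F x := by
  intro x hx
  obtain ⟨z, hzK, hzmin⟩ := hΩc.exists_isMinOn ⟨x, hx⟩ hFc
  refine (hfr z ?_).trans (hzmin hx)
  rw [hΩ.frontier_eq]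
  refine ⟨hzK, fun hzΩ => ?_⟩
  have hmin : IsLocalMin F z :=
    hzmin.isLocalMin (mem_of_superset (hΩ.mem_nhds hzΩ) subset_closure)
  exact (hlapl z hzΩ).not_ge (hmin.lapl_nonneg (hF z hzΩ))

end Laplacian

theorem deriv_deriv_exp_quadratic (α a b c C : ℝ) :
    deriv (deriv fun t : ℝ => Real.exp (-α * (a + b * t + c * t ^ 2)) - C) 0 =
      Real.exp (-α * a) * (α ^ 2 * b ^ 2 - 2 * α * c) := by
  have hq (t : ℝ) :
      HasDerivAt (fun t : ℝ => -α * (a + b * t + c * t ^ 2)) (-α * (b + 2 * c * t)) t := by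
    have h := ((((hasDerivAt_id t).const_mul b).const_add a).add
      ((hasDerivAt_pow 2 t).const_mul c)).const_mul (-α)
    exact h.congr_deriv (by simp only [Nat.add_one_sub_one, pow_one, Nat.cast_ofNat]; ring)
  have hd : deriv (fun t : ℝ => Real.exp (-α * (a + b * t + c * t ^ 2)) - C) =
      fun t => Real.exp (-α * (a + b * t + c * t ^ 2)) * (-α * (b + 2 * c * t)) :=
    funext fun t => ((hq t).exp.sub_const C).deriv
  have hlin : HasDerivAt (fun t : ℝ => -α * (b + 2 * c * t)) (-α * (2 * c)) 0 := by
    simpa using (((hasDerivAt_id (0 : ℝ)).const_mul (2 * c)).const_add b).const_mul (-α)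
  have hprod : HasDerivAt
      (fun t : ℝ => Real.exp (-α * (a + b * t + c * t ^ 2)) * (-α * (b + 2 * c * t)))
      (Real.exp (-α * (a + b * 0 + c * 0 ^ 2)) * (-α * (b + 2 * c * 0)) * (-α * (b + 2 * c * 0)) +
        Real.exp (-α * (a + b * 0 + c * 0 ^ 2)) * (-α * (2 * c))) 0 :=
    (hq 0).exp.mul hlin
  rw [hd, hprod.deriv]
  simp only [mul_zero, add_zero, ne_eq, OfNat.ofNat_ne_zero, not_false_eq_true, zero_pow]
  ring

section Annulus

variable {E : Type*} [NormedAddCommGroup E] [NormedSpace ℝ E] {r R : ℝ}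

theorem mem_annulus_iff (hr : r ≠ 0) {z : E} :
    z ∈ ball (0 : E) R \ closure (ball 0 r) ↔ r < ‖z‖ ∧ ‖z‖ < R := by
  simp [closure_ball _ hr, and_comm]

theorem exists_ball_subset_annulus (hr : 0 < r) {z : E} (hrz : r ≤ ‖z‖) (hzR : ‖z‖ ≤ R) :
    ∃ c, ball c ((R - r) / 2) ⊆ ball (0 : E) R \ closure (ball 0 r) ∧
      z ∈ closedBall c ((R - r) / 2) := by
  have hz : 0 < ‖z‖ := hr.trans_le hrz
  refine ⟨((r + R) / (2 * ‖z‖)) • z, fun y hy => ?_, ?_⟩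
  · have hc : ‖((r + R) / (2 * ‖z‖)) • z‖ = (r + R) / 2 := by
      rw [norm_smul, Real.norm_of_nonneg (div_nonneg (by linarith) (by positivity))]
      field_simp
    rw [mem_ball, dist_eq_norm] at hy
    have h1 := norm_sub_norm_le (((r + R) / (2 * ‖z‖)) • z) y
    have h2 := norm_le_norm_add_norm_sub' y (((r + R) / (2 * ‖z‖)) • z)
    rw [norm_sub_rev] at h1
    rw [mem_annulus_iff hr.ne']
    constructor <;> linarith
  · rw [mem_closedBall, dist_eq_norm]
    have : z - ((r + R) / (2 * ‖z‖)) • z = (1 - (r + R) / (2 * ‖z‖)) • z := by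
      rw [sub_smul, one_smul]
    have hmul : (1 - (r + R) / (2 * ‖z‖)) * ‖z‖ = ‖z‖ - (r + R) / 2 := by
      field_simp
    rw [this, norm_smul, Real.norm_eq_abs, ← abs_of_pos hz, ← abs_mul, abs_of_pos hz, hmul,
      abs_le]
    constructor <;> linarith

theorem closure_annulus (hr : 0 < r) (hrR : r < R) :
    closure (ball (0 : E) R \ closure (ball 0 r)) = {z | r ≤ ‖z‖ ∧ ‖z‖ ≤ R} := by
  refine subset_antisymm (closure_minimal (fun z hz => ?_) ?_) fun z ⟨hrz, hzR⟩ => ?_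
  · obtain ⟨h1, h2⟩ := (mem_annulus_iff hr.ne').1 hz
    exact ⟨h1.le, h2.le⟩
  · exact (isClosed_le continuous_const continuous_norm).inter
      (isClosed_le continuous_norm continuous_const)
  · obtain ⟨c, hsub, hzc⟩ := exists_ball_subset_annulus hr hrz hzR
    rw [← closure_ball c (by linarith)] at hzc
    exact closure_mono hsub hzc

theorem uniqueDiffOn_closure_annulus (hr : 0 < r) (hrR : r < R) :
    UniqueDiffOn ℝ (closure (ball (0 : E) R \ closure (ball 0 r))) := by
  intro z hz
  rw [closure_annulus hr hrR] at hz
  obtain ⟨c, hsub, hzc⟩ := exists_ball_subset_annulus hr hz.1 hz.2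
  rw [← closure_ball c (by linarith)] at hzc
  refine (uniqueDiffWithinAt_convex (convex_ball c _) ?_ hzc).mono (hsub.trans subset_closure)
  rw [isOpen_ball.interior_eq]
  exact nonempty_ball.2 (by linarith)

theorem norm_eq_or_norm_eq_of_mem_frontier_annulus (hr : 0 < r) (hrR : r < R) {z : E}
    (hz : z ∈ frontier (ball (0 : E) R \ closure (ball 0 r))) : ‖z‖ = r ∨ ‖z‖ = R := by
  rw [(isOpen_ball.sdiff isClosed_closure).frontier_eq, closure_annulus hr hrR, Set.mem_sdiff,
    mem_annulus_iff hr.ne'] at hz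
  obtain ⟨⟨h1, h2⟩, hnot⟩ := hz
  by_contra! hne
  exact hnot ⟨lt_of_le_of_ne h1 hne.1.symm, lt_of_le_of_ne h2 hne.2⟩

end Annulus

section Barrier

variable {F : Type*} [NormedAddCommGroup F]

noncomputable def hopfBarrier (α R : ℝ) (x : F) : ℝ :=
  Real.exp (-α * ‖x‖ ^ 2) - Real.exp (-α * R ^ 2)

variable {α R : ℝ}

theorem hopfBarrier_of_norm_eq {x : F} (hx : ‖x‖ = R) : hopfBarrier α R x = 0 := by
  simp [hopfBarrier, hx]

theorem hopfBarrier_lt_one (hα : 0 ≤ α) (x : F) : hopfBarrier α R x < 1 := by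
  have h1 : Real.exp (-α * ‖x‖ ^ 2) ≤ 1 := Real.exp_le_one_iff.2 (by nlinarith [sq_nonneg ‖x‖])
  have h2 := Real.exp_pos (-α * R ^ 2)
  unfold hopfBarrier
  linarith

variable [InnerProductSpace ℝ F]

theorem contDiff_hopfBarrier : ContDiff ℝ 2 (hopfBarrier α R : F → ℝ) :=
  ((contDiff_const.mul (contDiff_norm_sq ℝ)).exp).sub contDiff_const

theorem hasFDerivAt_hopfBarrier (x : F) :
    HasFDerivAt (hopfBarrier α R) ((-2 * α * Real.exp (-α * ‖x‖ ^ 2)) • innerSL ℝ x) x := by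
  have := (((hasStrictFDerivAt_norm_sq x).hasFDerivAt.const_mul (-α)).exp).sub_const
    (Real.exp (-α * R ^ 2))
  refine this.congr_fderiv ?_
  ext v
  simp only [neg_mul, neg_smul, smul_neg, neg_apply, smul_apply, coe_innerSL_apply, nsmul_eq_mul,
    Nat.cast_ofNat, smul_eq_mul, neg_inj]
  ring

theorem norm_add_smul_sq (z e : F) (t : ℝ) :
    ‖z + t • e‖ ^ 2 = ‖z‖ ^ 2 + 2 * ⟪z, e⟫ * t + ‖e‖ ^ 2 * t ^ 2 := by
  rw [norm_add_sq_real, inner_smul_right, norm_smul, Real.norm_eq_abs, mul_pow, sq_abs]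
  ring

theorem iteratedFDeriv_hopfBarrier (z e : F) :
    iteratedFDeriv ℝ 2 (hopfBarrier α R) z ![e, e] =
      Real.exp (-α * ‖z‖ ^ 2) * (4 * α ^ 2 * ⟪z, e⟫ ^ 2 - 2 * α * ‖e‖ ^ 2) := by
  have hline : (fun t : ℝ => hopfBarrier α R (z + t • e)) = fun t =>
      Real.exp (-α * (‖z‖ ^ 2 + 2 * ⟪z, e⟫ * t + ‖e‖ ^ 2 * t ^ 2)) - Real.exp (-α * R ^ 2) := by
    simp only [hopfBarrier, norm_add_smul_sq]
  rw [contDiff_hopfBarrier.contDiffAt.iteratedFDeriv_two_apply_self_eq_deriv_deriv, hline,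
    deriv_deriv_exp_quadratic]
  ring

theorem lapl_hopfBarrier {n : ℕ} (z : EuclideanSpace ℝ (Fin n)) :
    lapl (hopfBarrier α R) z = Real.exp (-α * ‖z‖ ^ 2) * (4 * α ^ 2 * ‖z‖ ^ 2 - 2 * α * n) := by
  simp only [lapl, iteratedFDeriv_hopfBarrier, EuclideanSpace.inner_single_right,
    PiLp.norm_single, norm_one, one_pow, mul_one, one_mul, conj_trivial]
  rw [← Finset.mul_sum, Finset.sum_sub_distrib, ← Finset.mul_sum,
    ← EuclideanSpace.real_norm_sq_eq]
  simp [mul_comm]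

end Barrier

section Hopf

variable {E : Type*} [NormedAddCommGroup E] [NormedSpace ℝ E]

theorem HasFDerivWithinAt.apply_le_of_le_of_eq {u w : E → ℝ} {K : Set E} {x₀ v : E}
    {L L' : E →L[ℝ] ℝ} (hu : HasFDerivWithinAt u L K x₀) (hw : HasFDerivWithinAt w L' K x₀)
    (hle : ∀ x ∈ K, w x ≤ u x) (heq : w x₀ = u x₀) (hv : v ∈ posTangentConeAt K x₀) :
    L' v ≤ L v := by
  have hmin : IsLocalMinOn (u - w) K x₀ :=
    IsMinOn.localize fun x hx => by simpa [heq] using hle x hx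
  simpa using hmin.hasFDerivWithinAt_nonneg (hu.sub hw) hv

theorem exists_pos_forall_fderiv_apply_neg {u : E → ℝ} {Ω : Set E} (hΩ : IsOpen Ω)
    (hu : ContDiffOn ℝ 1 u (closure Ω)) (hUD : UniqueDiffOn ℝ (closure Ω)) {x₀ v : E}
    (hx₀ : x₀ ∈ closure Ω) (hneg : fderivWithin ℝ u (closure Ω) x₀ v < 0) :
    ∃ δ > 0, ∀ x ∈ Ω, dist x x₀ < δ → fderiv ℝ u x v < 0 := by
  have hcont : ContinuousWithinAt (fun y => fderivWithin ℝ u (closure Ω) y v) (closure Ω) x₀ :=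
    ((hu.continuousOn_fderivWithin hUD le_rfl) x₀ hx₀).clm_apply continuousWithinAt_const
  obtain ⟨δ, hδ, hball⟩ := Metric.mem_nhdsWithin_iff.1 (hcont.eventually_lt_const hneg)
  refine ⟨δ, hδ, fun x hx hxδ => ?_⟩
  rw [← fderivWithin_of_mem_nhds (mem_of_superset (hΩ.mem_nhds hx) subset_closure)]
  exact hball ⟨hxδ, subset_closure hx⟩

variable {F : Type*} [NormedAddCommGroup F] [InnerProductSpace ℝ F]

theorem HasFDerivWithinAt.apply_eq_zero_of_inner_eq_zero {u : F → ℝ} {K : Set F}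
    {L : F →L[ℝ] ℝ} {R c : ℝ} {x₀ v : F} (hL : HasFDerivWithinAt u L K x₀)
    (hK : sphere 0 R ⊆ K) (hconst : ∀ y ∈ sphere (0 : F) R, u y = c) (hR : 0 < R)
    (hx₀ : ‖x₀‖ = R) (hv : ⟪x₀, v⟫ = 0) : L v = 0 := by
  rcases eq_or_ne v 0 with rfl | hv0
  · simp
  set s := R / ‖v‖
  have hs : s ≠ 0 := div_ne_zero hR.ne' (norm_ne_zero_iff.2 hv0)
  have hsv : ‖s • v‖ = R := by
    rw [norm_smul, Real.norm_of_nonneg (by positivity),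
      div_mul_cancel₀ _ (norm_ne_zero_iff.2 hv0)]
  set γ : ℝ → F := fun t => Real.cos t • x₀ + Real.sin t • (s • v)
  have hγ (t : ℝ) : γ t ∈ sphere 0 R := by
    rw [mem_sphere_zero_iff_norm]
    refine (sq_eq_sq₀ (norm_nonneg _) hR.le).1 ?_
    rw [norm_add_sq_real, inner_smul_left, inner_smul_right, inner_smul_right, hv, norm_smul,
      norm_smul, hsv, hx₀, Real.norm_eq_abs, Real.norm_eq_abs, mul_pow, mul_pow, sq_abs, sq_abs]
    simp only [conj_trivial, mul_zero, add_zero]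
    linear_combination R ^ 2 * Real.cos_sq_add_sin_sq t
  have hγ' : HasDerivAt γ (s • v) 0 := by
    have := ((Real.hasDerivAt_cos 0).smul_const x₀).add
      ((Real.hasDerivAt_sin 0).smul_const (s • v))
    simp only [Real.sin_zero, neg_zero, zero_smul, Real.cos_zero, one_smul, zero_add] at this
    exact this
  have hγ0 : γ 0 = x₀ := by simp [γ]
  rw [← hγ0] at hL
  have hcomp : HasDerivAt (u ∘ γ) (L (s • v)) 0 := hasDerivWithinAt_univ.1
    (hL.comp_hasDerivWithinAt 0 hγ'.hasDerivWithinAt fun t _ => hK (hγ t))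
  have hconst' : HasDerivAt (u ∘ γ) 0 0 := (hasDerivAt_const (0 : ℝ) c).congr_of_eventuallyEq
    (Eventually.of_forall fun t => hconst _ (hγ t))
  have := hcomp.unique hconst'
  rwa [map_smul, smul_eq_mul, mul_eq_zero, or_iff_right hs] at this

theorem ContinuousLinearMap.apply_neg_of_inner_pos (L : F →L[ℝ] ℝ) {x₀ e : F} (hx₀ : L x₀ < 0)
    (horth : ∀ v, ⟪x₀, v⟫ = 0 → L v = 0) (he : 0 < ⟪x₀, e⟫) : L e < 0 := by
  have hx₀0 : x₀ ≠ 0 := by rintro rfl; simp at he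
  set a := ⟪x₀, e⟫ / ‖x₀‖ ^ 2
  have ha : 0 < a := div_pos he (by positivity)
  have hperp : ⟪x₀, e - a • x₀⟫ = 0 := by
    rw [inner_sub_right, inner_smul_right, real_inner_self_eq_norm_sq,
      div_mul_cancel₀ _ (pow_ne_zero 2 (norm_ne_zero_iff.2 hx₀0)), sub_self]
  have hsplit : L e = L (e - a • x₀) + a * L x₀ := by
    rw [map_sub, map_smul, smul_eq_mul]; ring
  rw [hsplit, horth _ hperp, zero_add]
  exact mul_neg_of_pos_of_neg ha hx₀

theorem HasFDerivWithinAt.apply_self_neg_of_hopfBarrier_le {α r R : ℝ} (hα : 0 < α) (hr : 0 < r)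
    (hrR : r < R) {u : F → ℝ} {L : F →L[ℝ] ℝ} {x₀ : F}
    (hL : HasFDerivWithinAt u L (closure (ball (0 : F) R \ closure (ball 0 r))) x₀)
    (hle : ∀ x ∈ closure (ball (0 : F) R \ closure (ball 0 r)), hopfBarrier α R x ≤ u x)
    (hx₀ : ‖x₀‖ = R) (hux₀ : u x₀ = 0) : L x₀ < 0 := by
  rw [closure_annulus hr hrR] at hL hle
  have hR : 0 < R := hr.trans hrR
  have hcone : -x₀ ∈ posTangentConeAt {x : F | r ≤ ‖x‖ ∧ ‖x‖ ≤ R} x₀ := by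
    refine mem_posTangentConeAt_of_frequently_mem (Eventually.frequently ?_)
    filter_upwards [Ioo_mem_nhdsGT (div_pos (sub_pos.2 hrR) hR)] with t ⟨ht0, ht1⟩
    have ht1' : t * R < R - r := (lt_div_iff₀ hR).1 ht1
    have hnorm : ‖x₀ + t • -x₀‖ = (1 - t) * R := by
      rw [show x₀ + t • -x₀ = (1 - t) • x₀ by module, norm_smul, hx₀,
        Real.norm_of_nonneg (by nlinarith)]
    rw [hnorm]
    constructor <;> nlinarith
  have hbarrier := (hasFDerivAt_hopfBarrier (α := α) (R := R) x₀).hasFDerivWithinAt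
    (s := {x : F | r ≤ ‖x‖ ∧ ‖x‖ ≤ R})
  have := hL.apply_le_of_le_of_eq hbarrier hle (by rw [hopfBarrier_of_norm_eq hx₀, hux₀]) hcone
  simp only [smul_apply, innerSL_apply_apply, real_inner_self_eq_norm_sq, hx₀, map_neg,
    smul_eq_mul] at this
  nlinarith [Real.exp_pos (-α * R ^ 2), mul_pos hα (pow_pos hR 2)]

end Hopf

theorem hopfBarrier_le_of_mem_closure_annulus {n : ℕ} (hn : 0 < n) {R : ℝ} (hR : 1 < R)
    {u : EuclideanSpace ℝ (Fin n) → ℝ}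
    (hu : ContDiffOn ℝ 2 u (closure (ball (0 : EuclideanSpace ℝ (Fin n)) R \ closure (ball 0 1))))
    (hsuper : ∀ x ∈ ball (0 : EuclideanSpace ℝ (Fin n)) R \ closure (ball 0 1), lapl u x ≤ 0)
    (hb1 : ∀ x : EuclideanSpace ℝ (Fin n), ‖x‖ = 1 → 1 ≤ u x)
    (hbR : ∀ x : EuclideanSpace ℝ (Fin n), ‖x‖ = R → 0 ≤ u x) :
    ∀ x ∈ closure (ball (0 : EuclideanSpace ℝ (Fin n)) R \ closure (ball 0 1)),
      hopfBarrier n R x ≤ u x := by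
  set Ω := ball (0 : EuclideanSpace ℝ (Fin n)) R \ closure (ball 0 1)
  have hΩ : IsOpen Ω := isOpen_ball.sdiff isClosed_closure
  have hw : ContDiff ℝ 2 (hopfBarrier (n : ℝ) R : EuclideanSpace ℝ (Fin n) → ℝ) :=
    contDiff_hopfBarrier
  have hu' (z : _) (hz : z ∈ Ω) : ContDiffAt ℝ 2 u z :=
    hu.contDiffAt (mem_of_superset (hΩ.mem_nhds hz) subset_closure)
  intro x hx
  have := le_of_forall_mem_frontier_le_of_lapl_neg (F := u - hopfBarrier n R) (m := 0) hΩ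
    (isBounded_ball.subset sdiff_subset).isCompact_closure
    (hu.continuousOn.sub hw.continuous.continuousOn) (fun z hz => (hu' z hz).sub hw.contDiffAt)
    ?lapl ?frontier x hx
  · simpa [sub_nonneg] using this
  case lapl =>
    intro z hz
    have hz1 : 1 < ‖z‖ := ((mem_annulus_iff one_ne_zero).1 hz).1
    have hn' : (0 : ℝ) < n := Nat.cast_pos.2 hn
    rw [lapl_sub (hu' z hz) hw.contDiffAt, lapl_hopfBarrier]
    have : 0 < Real.exp (-n * ‖z‖ ^ 2) * (4 * n ^ 2 * ‖z‖ ^ 2 - 2 * n * n) :=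
      mul_pos (Real.exp_pos _)
        (by nlinarith [mul_lt_mul_of_pos_left (one_lt_pow₀ hz1 two_ne_zero) (pow_pos hn' 2)])
    linarith [hsuper z hz]
  case frontier =>
    intro z hz
    rw [Pi.sub_apply, sub_nonneg]
    rcases norm_eq_or_norm_eq_of_mem_frontier_annulus one_pos hR hz with hz1 | hzR
    · linarith [hopfBarrier_lt_one (R := R) (Nat.cast_nonneg n) z, hb1 z hz1]
    · rw [hopfBarrier_of_norm_eq hzR]
      exact hbR z hzR

theorem stmt_4 (n : ℕ) (hn : 2 ≤ n) (R : ℝ) (hR : 1 < R)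
    (f : ℝ → ℝ) (hfnonpos : ∀ s, f s ≤ 0)
    (Ω : Set (EuclideanSpace ℝ (Fin n)))
    (hΩ : Ω = ball (0 : EuclideanSpace ℝ (Fin n)) R \ closure (ball 0 1))
    (u : EuclideanSpace ℝ (Fin n) → ℝ)
    (hu : ContDiffOn ℝ 2 u (closure Ω))
    (hpde : ∀ x ∈ Ω, lapl u x = f (u x))
    (hb1 : ∀ x : EuclideanSpace ℝ (Fin n), ‖x‖ = 1 → u x = 1)
    (hbR : ∀ x : EuclideanSpace ℝ (Fin n), ‖x‖ = R → u x = 0)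
    (x₀ : EuclideanSpace ℝ (Fin n)) (hx₀ : x₀ ∈ sphere (0 : EuclideanSpace ℝ (Fin n)) R)
    (hx₀1 : 0 < x₀ ⟨0, by omega⟩) :
    ∃ δ > 0, ∀ x ∈ Ω, dist x x₀ < δ →
      fderiv ℝ u x (EuclideanSpace.single ⟨0, by omega⟩ (1 : ℝ)) < 0 := by
  subst hΩ
  have hn0 : 0 < n := by omega
  have hK := closure_annulus (E := EuclideanSpace ℝ (Fin n)) one_pos hR
  have hx₀R : ‖x₀‖ = R := mem_sphere_zero_iff_norm.1 hx₀
  have hx₀K : x₀ ∈ closure (ball (0 : EuclideanSpace ℝ (Fin n)) R \ closure (ball 0 1)) := by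
    rw [hK]; exact ⟨by linarith, hx₀R.le⟩
  have hL := (hu.differentiableOn two_ne_zero x₀ hx₀K).hasFDerivWithinAt
  have hbarrier := hopfBarrier_le_of_mem_closure_annulus hn0 hR hu
    (fun x hx => (hpde x hx).trans_le (hfnonpos _)) (fun x hx => (hb1 x hx).ge)
    (fun x hx => (hbR x hx).ge)
  have hradial := hL.apply_self_neg_of_hopfBarrier_le (Nat.cast_pos.2 hn0) one_pos hR hbarrier
    hx₀R (hbR x₀ hx₀R)
  have htangent (v : EuclideanSpace ℝ (Fin n)) (hv : ⟪x₀, v⟫ = 0) :=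
    hL.apply_eq_zero_of_inner_eq_zero (fun y hy => by
      rw [hK, mem_ofPred_eq, mem_sphere_zero_iff_norm.1 hy]; exact ⟨hR.le, le_rfl⟩)
      (fun y hy => hbR y (mem_sphere_zero_iff_norm.1 hy)) (by linarith) hx₀R hv
  refine exists_pos_forall_fderiv_apply_neg (isOpen_ball.sdiff isClosed_closure)
    (hu.of_le one_le_two) (uniqueDiffOn_closure_annulus one_pos hR) hx₀K ?_
  exact ContinuousLinearMap.apply_neg_of_inner_pos _ hradial htangent
    (by simpa [EuclideanSpace.inner_single_right] using hx₀1)
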